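/- arXiv:1706.00611 — 5 statements merged into one kernel-verified Lean document; each statement's English description precedes it below -/
import Mathlib

section
/- Let L and S be positive integers with 2^S dividing L, let 𝒦 be a finite set of keys with |𝒦| ≥ S, and let a : 𝒦 → Fin L → {0,1} be a family of binary sequences such that for every integer s with 2 ≤ s ≤ S, all distinct keys k₁,…,k_s ∈ 𝒦 and all bits b₁,…,b_s ∈ {0,1}, the pattern count #{i ∈ Fin L : a(k₁)(i)=b₁, …, a(k_s)(i)=b_s} equals L/2^s. Fix an integer s with 2 ≤ s ≤ S and a real γ with 0 < γ ≤ 1 such that n = γL is an integer, let T ⊆ Fin L with |T| = n, and let g : Fin L → {0,1} be an arbitrary guessing function. Let r be the unique integer ≥ −1 with P_s(r) ≤ γ/2 < P_s(r+1), and set n_correct(γ) = L·[P_{s−1}(r) + ((s−r−1)/s)·(γ − 2·P_s(r))]. Then the number of keys k ∈ 𝒦 with #{i ∈ T : g(i) = a(k)(i)} > n_correct(γ) is at most s − 1; equivalently, a uniformly random key k ∈ 𝒦 satisfies #{i ∈ T : g(i) = a(k)(i)} ≤ n_correct(γ) with probability at least 1 − s/|𝒦|. -/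
open Finset

/-- Cumulative distribution function of the binomial distribution with `s` trials and
success probability `1/2`: `P_s(t) = 2^{-s} ∑_{j=0}^{t} C(s,j)` for `t ≥ 0`, and `0` for `t < 0`. -/
noncomputable def binomCDF (s : ℕ) (t : ℤ) : ℝ :=
  if t < 0 then 0 else (∑ j ∈ Finset.range (t.toNat + 1), (s.choose j : ℝ)) / 2 ^ s

/-!
Fix `s` distinct keys and let `D(i)` be the set of those keys whose bit at position `i` differs
from the guess `g i`. As every `s`-bit pattern occurs exactly `L / 2^s` times and `g i` together
with `D(i)` determines the pattern at `i`, each set `D` equals `D(i)` for at most `2L / 2^s`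
positions; hence at most `2L · P_s(u)` positions have `|D(i)| ≤ u`. Bounding the total number
of agreements `∑_{i ∈ T} (s - |D(i)|)` by these counts yields exactly `s · n_correct(γ)`, so
one of the `s` keys agrees with `g` on at most `n_correct(γ)` positions of `T`.
-/

def cumChoose (s t : ℕ) : ℕ := ∑ j ∈ range (t + 1), s.choose j

lemma cumChoose_of_le {s t : ℕ} (h : s ≤ t) : cumChoose s t = 2 ^ s := by
  rw [cumChoose, ← Nat.sum_range_choose, eq_comm]
  exact sum_subset (range_subset_range.2 (by omega)) fun j hj hjs =>
    Nat.choose_eq_zero_of_lt (by simp only [mem_range] at hj hjs; omega)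

lemma sub_mul_choose (s j : ℕ) : (s - j) * s.choose j = s * (s - 1).choose j := by
  rcases s with _ | s
  · simp
  · simpa [mul_comm] using (Nat.choose_mul_succ_eq s j).symm

lemma sum_range_sum_range_eq {M : Type*} [AddCommMonoid M] (f : ℕ → M) (t : ℕ) :
    ∑ u ∈ range (t + 1), ∑ j ∈ range (u + 1), f j =
      ∑ j ∈ range (t + 1), (t + 1 - j) • f j := by
  have := sum_Ico_Ico_comm 0 (t + 1) (fun j _ => f j)
  simp only [← range_eq_Ico, sum_const, Nat.card_Ico] at this
  exact this.symm

lemma sum_cumChoose_add {s t : ℕ} (hts : t + 1 ≤ s) :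
    ∑ u ∈ range (t + 1), cumChoose s u + (s - t - 1) * cumChoose s t =
      s * cumChoose (s - 1) t := by
  simp only [cumChoose, sum_range_sum_range_eq, smul_eq_mul, mul_sum, ← sum_add_distrib]
  refine sum_congr rfl fun j hj => ?_
  rw [← sub_mul_choose, ← add_mul]
  congr 1
  simp only [mem_range] at hj
  omega

lemma card_filter_card_le (α : Type*) [Fintype α] (u : ℕ) :
    #{M : Finset α | #M ≤ u} = cumChoose (Fintype.card α) u := by
  classical
  rw [card_eq_sum_card_fiberwise (f := card) (t := range (u + 1))
    fun M hM => by simpa [Nat.lt_succ_iff] using hM]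
  refine sum_congr rfl fun j hj => ?_
  rw [← card_univ, ← card_powersetCard, powersetCard_eq_filter, powerset_univ, filter_filter]
  congr 1
  ext M
  simp only [mem_range] at hj
  simp only [mem_filter, mem_univ, true_and]
  omega

section Mismatch

variable {ι : Type*} [Fintype ι] {s : ℕ} (v : Fin s → ι → Bool) (g : ι → Bool)

def mismatches (i : ι) : Finset (Fin s) := {j | g i ≠ v j i}

variable {v} {q : ℕ} (hv : ∀ b : Fin s → Bool, #{i | ∀ j, v j i = b j} ≤ q)
include hv

lemma card_filter_mismatches_eq_le (D : Finset (Fin s)) :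
    #{i | mismatches v g i = D} ≤ 2 * q := by
  classical
  -- on positions with `g i = c`, the sequences show the pattern `j ↦ xor c (j ∈ D)`
  have hfiber (c : Bool) : #{i | mismatches v g i = D ∧ g i = c} ≤ q :=
    (card_le_card fun i hi => by
      simp only [mem_filter, mem_univ, true_and, mismatches, Finset.ext_iff] at hi ⊢
      obtain ⟨hD, rfl⟩ := hi
      intro j
      simp only [← hD j]
      cases g i <;> cases v j i <;> decide).trans (hv fun j => xor c (decide (j ∈ D)))
  calc #{i | mismatches v g i = D}
      = ∑ c : Bool, #{i | mismatches v g i = D ∧ g i = c} := by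
        rw [card_eq_sum_card_fiberwise (f := g) (t := univ) fun _ _ => mem_univ _]
        simp only [filter_filter]
    _ ≤ 2 * q := by rw [Fintype.sum_bool]; linarith [hfiber false, hfiber true]

lemma card_filter_card_mismatches_le (u : ℕ) :
    #{i | #(mismatches v g i) ≤ u} ≤ 2 * q * cumChoose s u := by
  classical
  calc #{i | #(mismatches v g i) ≤ u}
      ≤ 2 * q * #(({i | #(mismatches v g i) ≤ u} : Finset ι).image (mismatches v g)) :=
        card_le_mul_card_image _ _ fun D _ =>
          (card_le_card (filter_subset_filter _ (filter_subset _ _))).trans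
            (by simpa only [filter_filter] using card_filter_mismatches_eq_le g hv D)
    _ ≤ 2 * q * #{D : Finset (Fin s) | #D ≤ u} := by
        gcongr
        intro D
        simp only [mem_image, mem_filter, mem_univ, true_and]
        rintro ⟨i, hi, rfl⟩
        exact hi
    _ = 2 * q * cumChoose s u := by rw [card_filter_card_le, Fintype.card_fin]

lemma sum_card_agree_le (T : Finset ι) (t : ℕ) :
    ∑ j, #{i ∈ T | g i = v j i} ≤
      (s - t - 1) * #T + 2 * q * ∑ u ∈ range (t + 1), cumChoose s u := by
  classical
  have hpoint (i : ι) : #{j | g i = v j i} ≤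
      (s - t - 1) + #{u ∈ range (t + 1) | #(mismatches v g i) ≤ u} := by
    -- the last count is `t + 1 - min #(mismatches v g i) (t + 1)`
    have hsplit : #{j | g i = v j i} + #(mismatches v g i) = s := by
      simpa [mismatches] using card_filter_add_card_filter_not (s := (univ : Finset (Fin s)))
        (fun j => g i = v j i)
    have hIco : ({u ∈ range (t + 1) | #(mismatches v g i) ≤ u} : Finset ℕ) =
        Ico #(mismatches v g i) (t + 1) := by
      ext u; simp only [mem_filter, mem_range, mem_Ico]; omega
    rw [hIco, Nat.card_Ico]
    omega
  calc ∑ j, #{i ∈ T | g i = v j i}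
      = ∑ i ∈ T, #{j | g i = v j i} := by
        simp only [card_filter]; exact sum_comm
    _ ≤ ∑ i ∈ T, ((s - t - 1) + #{u ∈ range (t + 1) | #(mismatches v g i) ≤ u}) :=
        sum_le_sum fun i _ => hpoint i
    _ ≤ (s - t - 1) * #T + ∑ u ∈ range (t + 1), #{i | #(mismatches v g i) ≤ u} := by
        rw [sum_add_distrib, sum_const, smul_eq_mul, mul_comm]
        gcongr
        simp only [card_filter]
        rw [sum_comm]
        exact sum_le_sum fun u _ => sum_le_sum_of_subset (subset_univ T)
    _ ≤ _ := by
        rw [mul_sum]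
        gcongr with u
        exact card_filter_card_mismatches_le g hv u

end Mismatch

lemma binomCDF_of_neg (s : ℕ) {r : ℤ} (hr : r < 0) : binomCDF s r = 0 := if_pos hr

lemma binomCDF_natCast (s t : ℕ) : binomCDF s t = cumChoose s t / 2 ^ s := by
  simp [binomCDF, cumChoose]

lemma lt_of_binomCDF_lt_one {s t : ℕ} (h : binomCDF s t < 1) : t < s := by
  by_contra! hst
  rw [binomCDF_natCast, cumChoose_of_le hst] at h
  simp at h

noncomputable def nCorrect (L s : ℕ) (γ : ℝ) (r : ℤ) : ℝ :=
  L * (binomCDF (s - 1) r + ((s : ℝ) - r - 1) / s * (γ - 2 * binomCDF s r))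

lemma mul_nCorrect_of_neg (L : ℕ) {s : ℕ} (hs : 0 < s) (γ : ℝ) {r : ℤ} (hr : r < 0) :
    s * nCorrect L s γ r = (s - r - 1) * (γ * L) := by
  rw [nCorrect, binomCDF_of_neg _ hr, binomCDF_of_neg _ hr]
  field_simp
  ring

lemma mul_nCorrect_natCast {L s q t : ℕ} (hL : L = 2 ^ s * q) (hts : t < s) (γ : ℝ) :
    s * nCorrect L s γ t =
      (s - t - 1 : ℕ) * (γ * L) + 2 * q * ∑ u ∈ range (t + 1), cumChoose s u := by
  have hsub : ((s - t - 1 : ℕ) : ℝ) = s - t - 1 := by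
    rw [Nat.sub_sub, Nat.cast_sub hts]; push_cast; ring
  have hid : (∑ u ∈ range (t + 1), cumChoose s u : ℝ) + (s - t - 1) * cumChoose s t =
      s * cumChoose (s - 1) t := by rw [← hsub]; exact_mod_cast sum_cumChoose_add hts
  obtain ⟨m, rfl⟩ : ∃ m, s = m + 1 := ⟨s - 1, by omega⟩
  rw [Nat.add_sub_cancel] at hid
  rw [nCorrect, binomCDF_natCast, binomCDF_natCast, hsub, hL, Nat.add_sub_cancel]
  push_cast at hid ⊢
  field_simp
  linear_combination (-2 * q * 2 ^ m : ℝ) * hid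

lemma sum_card_agree_le_mul_nCorrect {ι : Type*} [Fintype ι] {s : ℕ} (hs : 0 < s)
    {v : Fin s → ι → Bool}
    (hv : ∀ b : Fin s → Bool, #{i | ∀ j, v j i = b j} = Fintype.card ι / 2 ^ s)
    (hdvd : 2 ^ s ∣ Fintype.card ι) (g : ι → Bool) (T : Finset ι) {γ : ℝ}
    (hγ1 : γ ≤ 1) (hT : (#T : ℝ) = γ * Fintype.card ι) {r : ℤ}
    (hr : binomCDF s r ≤ γ / 2) :
    ∑ j, (#{i ∈ T | g i = v j i} : ℝ) ≤ s * nCorrect (Fintype.card ι) s γ r := by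
  rcases lt_or_ge r 0 with hneg | hnonneg
  · calc ∑ j, (#{i ∈ T | g i = v j i} : ℝ)
        ≤ ∑ _j : Fin s, (#T : ℝ) :=
          sum_le_sum fun j _ => by exact_mod_cast card_filter_le _ _
      _ ≤ (s - r - 1) * (γ * Fintype.card ι) := by
        rw [sum_const, card_univ, Fintype.card_fin, nsmul_eq_mul, ← hT]
        have hr' : (r : ℝ) ≤ -1 := by exact_mod_cast Int.le_sub_one_of_lt hneg
        nlinarith [(#T).cast_nonneg (α := ℝ)]
      _ = _ := (mul_nCorrect_of_neg _ hs γ hneg).symm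
  · lift r to ℕ using hnonneg
    obtain ⟨q, hq⟩ := hdvd
    have hts : r < s := lt_of_binomCDF_lt_one (by linarith)
    have hvq (b : Fin s → Bool) : #{i | ∀ j, v j i = b j} ≤ q := by
      rw [hv, hq, Nat.mul_div_cancel_left _ (by positivity)]
    rw [mul_nCorrect_natCast hq hts, ← hT]
    exact_mod_cast sum_card_agree_le g hvq T r

lemma card_subtype_lt_of_forall_injective {K : Type*} [Fintype K] {p : K → Prop} {s : ℕ}
    (h : ∀ ks : Fin s → K, Function.Injective ks → ∃ j, ¬ p (ks j)) :
    Nat.card {k // p k} < s := by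
  classical
  by_contra! hle
  obtain ⟨e⟩ := Function.Embedding.nonempty_of_card_le (α := Fin s) (β := {k // p k})
    (by simpa [Nat.card_eq_fintype_card] using hle)
  obtain ⟨j, hj⟩ := h (fun j => e j) (Subtype.val_injective.comp e.injective)
  exact hj (e j).2

lemma one_sub_div_le_card_subtype_le_div {K : Type*} [Fintype K] (hK : 0 < Fintype.card K)
    (f : K → ℝ) (c : ℝ) {s : ℕ} (h : Nat.card {k // f k > c} ≤ s) :
    1 - s / Fintype.card K ≤ (Nat.card {k // f k ≤ c} : ℝ) / Fintype.card K := by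
  classical
  have hsum : Nat.card {k // f k ≤ c} + Nat.card {k // f k > c} = Fintype.card K := by
    simp only [Nat.card_eq_fintype_card, Fintype.card_subtype, ← not_le]
    exact card_filter_add_card_filter_not _
  rw [one_sub_div (by positivity), div_le_div_iff_of_pos_right (by positivity)]
  have : (Nat.card {k // f k ≤ c} : ℝ) + Nat.card {k // f k > c} = Fintype.card K := by
    exact_mod_cast hsum
  have : (Nat.card {k // f k > c} : ℝ) ≤ s := by exact_mod_cast h
  linarith

theorem stmt0_general {K : Type*} [Fintype K] (L S : ℕ)
    (hdvd : 2 ^ S ∣ L) (hK : S ≤ Fintype.card K)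
    (a : K → Fin L → Bool)
    (hpatt : ∀ s : ℕ, 2 ≤ s → s ≤ S → ∀ ks : Fin s → K, Function.Injective ks →
      ∀ b : Fin s → Bool,
        (Finset.univ.filter (fun i : Fin L => ∀ j, a (ks j) i = b j)).card = L / 2 ^ s)
    (s : ℕ) (hs2 : 2 ≤ s) (hsS : s ≤ S)
    (γ : ℝ) (hγ1 : γ ≤ 1)
    (n : ℕ) (hn : (n : ℝ) = γ * L)
    (T : Finset (Fin L)) (hT : T.card = n)
    (g : Fin L → Bool)
    (r : ℤ)
    (hr1 : binomCDF s r ≤ γ / 2) :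
    Nat.card {k : K //
        ((T.filter (fun i => g i = a k i)).card : ℝ) >
          L * (binomCDF (s - 1) r + ((s : ℝ) - r - 1) / s * (γ - 2 * binomCDF s r))}
      ≤ s - 1 ∧
    (Nat.card {k : K //
        ((T.filter (fun i => g i = a k i)).card : ℝ) ≤
          L * (binomCDF (s - 1) r + ((s : ℝ) - r - 1) / s * (γ - 2 * binomCDF s r))} : ℝ)
        / Fintype.card K ≥ 1 - s / Fintype.card K := by
  have hgood (ks : Fin s → K) (hks : Function.Injective ks) :
      ∃ j, ¬ ((T.filter (fun i => g i = a (ks j) i)).card : ℝ) > nCorrect L s γ r := by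
    have hsum := sum_card_agree_le_mul_nCorrect (v := fun j => a (ks j)) (by omega)
      (by simpa using hpatt s hs2 hsS ks hks) (by simpa using (pow_dvd_pow 2 hsS).trans hdvd)
      g T hγ1 (by simpa [hT] using hn) hr1
    simp only [Fintype.card_fin] at hsum
    obtain ⟨j, -, hj⟩ := exists_le_of_sum_le ⟨⟨0, by omega⟩, mem_univ _⟩
      (hsum.trans_eq (by simp : (s : ℝ) * nCorrect L s γ r = ∑ _j : Fin s, nCorrect L s γ r))
    exact ⟨j, not_lt.2 hj⟩
  have hbad := card_subtype_lt_of_forall_injective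
    (p := fun k => ((T.filter (fun i => g i = a k i)).card : ℝ) > nCorrect L s γ r) hgood
  exact ⟨Nat.le_sub_one_of_lt hbad, one_sub_div_le_card_subtype_le_div (by omega) _ _ hbad.le⟩

theorem stmt0 {K : Type*} [Fintype K] (L S : ℕ) (hL : 0 < L) (hS : 0 < S)
    (hdvd : 2 ^ S ∣ L) (hK : S ≤ Fintype.card K)
    (a : K → Fin L → Bool)
    (hpatt : ∀ s : ℕ, 2 ≤ s → s ≤ S → ∀ ks : Fin s → K, Function.Injective ks →
      ∀ b : Fin s → Bool,
        (Finset.univ.filter (fun i : Fin L => ∀ j, a (ks j) i = b j)).card = L / 2 ^ s)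
    (s : ℕ) (hs2 : 2 ≤ s) (hsS : s ≤ S)
    (γ : ℝ) (hγ0 : 0 < γ) (hγ1 : γ ≤ 1)
    (n : ℕ) (hn : (n : ℝ) = γ * L)
    (T : Finset (Fin L)) (hT : T.card = n)
    (g : Fin L → Bool)
    (r : ℤ) (hr : -1 ≤ r)
    (hr1 : binomCDF s r ≤ γ / 2) (hr2 : γ / 2 < binomCDF s (r + 1)) :
    Nat.card {k : K //
        ((T.filter (fun i => g i = a k i)).card : ℝ) >
          L * (binomCDF (s - 1) r + ((s : ℝ) - r - 1) / s * (γ - 2 * binomCDF s r))}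
      ≤ s - 1 ∧
    (Nat.card {k : K //
        ((T.filter (fun i => g i = a k i)).card : ℝ) ≤
          L * (binomCDF (s - 1) r + ((s : ℝ) - r - 1) / s * (γ - 2 * binomCDF s r))} : ℝ)
        / Fintype.card K ≥ 1 - s / Fintype.card K :=
  stmt0_general L S hdvd hK a hpatt s hs2 hsS γ hγ1 n hn T hT g r hr1
end

section
/- Let s ≥ 2 be an integer and γ a real number with 0 < γ ≤ 1. Let ν = (ν₀, …, ν_s) ∈ ℝ^{s+1} satisfy 0 ≤ ν_t ≤ 2^{−s} for all t and ∑_{t=0}^{s} C(s,t)·ν_t = γ. Then the objective value F(ν) = ∑_{t=0}^{⌊s/2⌋} C(s−1,t)·ν_t + ∑_{t=⌊s/2⌋+1}^{s} C(s−1,t−1)·ν_t satisfies F(ν) ≤ P_{s−1}(r) + ((s−r−1)/s)·(γ − 2·P_s(r)), where r is the unique integer ≥ −1 with P_s(r) ≤ γ/2 < P_s(r+1). -/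
open Finset

/-!
Since `s·C(s-1,t) = (s-t)·C(s,t)` and `s·C(s-1,t-1) = t·C(s,t)`, the objective satisfies
`s·F(ν) = ∑ max(t, s-t)·C(s,t)·ν_t`. Writing `n = r + 1` and subtracting `(s-n)·γ = (s-n)·∑ C(s,t)·ν_t`,
the coefficient of `C(s,t)·ν_t` becomes `max(n-t, n-(s-t)) ≤ (n-t)⁺ + (n-(s-t))⁺`. Bounding `ν_t` by
`2^{-s}` against this nonnegative majorant and folding the second term onto the first with
`C(s,t) = C(s,s-t)` gives exactly `s` times the right-hand side.
-/

theorem cast_mul_choose_sub_one {s : ℕ} (hs : 0 < s) (t : ℕ) :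
    (s : ℝ) * (s - 1).choose t = ((s : ℝ) - t) * s.choose t := by
  obtain ⟨m, rfl⟩ := Nat.exists_eq_add_one_of_ne_zero hs.ne'
  rcases le_or_gt t (m + 1) with ht | ht
  · rw [Nat.add_sub_cancel, ← Nat.cast_sub ht]
    exact_mod_cast by rw [mul_comm, Nat.choose_mul_succ_eq, mul_comm]
  · simp [Nat.choose_eq_zero_of_lt ht, Nat.choose_eq_zero_of_lt (by omega : m < t)]

theorem cast_mul_choose_sub_one_sub_one (s : ℕ) {t : ℕ} (ht : 0 < t) :
    (s : ℝ) * (s - 1).choose (t - 1) = t * s.choose t := by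
  obtain ⟨k, rfl⟩ := Nat.exists_eq_add_one_of_ne_zero ht.ne'
  cases s with
  | zero => simp
  | succ m => exact_mod_cast Nat.add_one_mul_choose_eq m k |>.trans (mul_comm _ _)

theorem binomCDF_natCast_sub_one (s n : ℕ) :
    binomCDF s ((n : ℤ) - 1) = (∑ j ∈ range n, (s.choose j : ℝ)) / 2 ^ s := by
  cases n with
  | zero => simp [binomCDF]
  | succ k => simp [binomCDF]

theorem sum_range_succ_mul_choose_reflect (s : ℕ) (f : ℕ → ℝ) :
    ∑ t ∈ range (s + 1), f (s - t) * s.choose t = ∑ t ∈ range (s + 1), f t * s.choose t := by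
  rw [← sum_range_reflect]
  refine sum_congr rfl fun t ht => ?_
  have ht : t ≤ s := Nat.lt_succ_iff.mp (mem_range.mp ht)
  rw [Nat.add_sub_cancel, Nat.sub_sub_self ht, Nat.choose_symm ht]

theorem sum_range_succ_max_sub_mul_choose (s n : ℕ) :
    ∑ t ∈ range (s + 1), max ((n : ℝ) - t) 0 * s.choose t =
      ∑ t ∈ range n, ((n : ℝ) - t) * s.choose t := by
  set f : ℕ → ℝ := fun t => max ((n : ℝ) - t) 0 * s.choose t
  have hchoose : ∑ t ∈ range (s + 1), f t = ∑ t ∈ range (n + s + 1), f t :=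
    sum_subset (range_subset_range.mpr (by omega)) fun t _ ht => by
      simp [f, Nat.choose_eq_zero_of_lt (by simpa using ht : s < t)]
  have hmax : ∑ t ∈ range n, f t = ∑ t ∈ range (n + s + 1), f t :=
    sum_subset (range_subset_range.mpr (by omega)) fun t _ ht => by
      simp [f, show (n : ℝ) ≤ t by exact_mod_cast not_lt.mp (mem_range.not.mp ht)]
  rw [hchoose, ← hmax]
  refine sum_congr rfl fun t ht => ?_
  simp only [f]
  rw [max_eq_left (sub_nonneg.mpr (by exact_mod_cast (mem_range.mp ht).le))]

theorem sum_range_half_add_sum_Icc (s : ℕ) (f : ℕ → ℝ) :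
    ∑ t ∈ range (s / 2 + 1), f t + ∑ t ∈ Icc (s / 2 + 1) s, f t = ∑ t ∈ range (s + 1), f t := by
  rw [range_eq_Ico, range_eq_Ico, ← Ico_add_one_right_eq_Icc]
  exact sum_Ico_consecutive f (by omega) (by omega)

theorem cast_mul_objective_eq {s : ℕ} (hs : 0 < s) (ν : ℕ → ℝ) :
    (s : ℝ) * (∑ t ∈ range (s / 2 + 1), ((s - 1).choose t : ℝ) * ν t +
      ∑ t ∈ Icc (s / 2 + 1) s, ((s - 1).choose (t - 1) : ℝ) * ν t) =
    ∑ t ∈ range (s + 1), max (t : ℝ) (s - t) * s.choose t * ν t := by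
  rw [← sum_range_half_add_sum_Icc s, mul_add, mul_sum, mul_sum]
  congr 1
  · refine sum_congr rfl fun t ht => ?_
    have ht : 2 * t ≤ s := by have := mem_range.mp ht; omega
    rw [max_eq_right (by rw [le_sub_iff_add_le, ← two_mul]; exact_mod_cast ht), ← mul_assoc,
      cast_mul_choose_sub_one hs]
  · refine sum_congr rfl fun t ht => ?_
    have ht : s < 2 * t := by have := (mem_Icc.mp ht).1; omega
    rw [max_eq_left (by rw [sub_le_iff_le_add, ← two_mul]; exact_mod_cast ht.le), ← mul_assoc,
      cast_mul_choose_sub_one_sub_one s (by omega)]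

theorem le_max_zero_mul {d x c : ℝ} (hx0 : 0 ≤ x) (hxc : x ≤ c) : d * x ≤ max d 0 * c :=
  (mul_le_mul_of_nonneg_right (le_max_left d 0) hx0).trans
    (mul_le_mul_of_nonneg_left hxc (le_max_right d 0))

theorem sum_max_mul_choose_mul_le {s : ℕ} {ν : ℕ → ℝ} {γ : ℝ} (n : ℕ)
    (hν0 : ∀ t ≤ s, 0 ≤ ν t) (hν1 : ∀ t ≤ s, ν t ≤ 1 / 2 ^ s)
    (hsum : ∑ t ∈ range (s + 1), (s.choose t : ℝ) * ν t = γ) :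
    ∑ t ∈ range (s + 1), max (t : ℝ) (s - t) * s.choose t * ν t ≤
      (s - n) * γ + 2 * ∑ t ∈ range n, ((n : ℝ) - t) * s.choose t / 2 ^ s := by
  set g : ℕ → ℝ := fun j => max ((n : ℝ) - j) 0
  have hpoint : ∀ t ∈ range (s + 1), (max (t : ℝ) (s - t) - (s - n)) * s.choose t * ν t ≤
      (g t + g (s - t)) * s.choose t / 2 ^ s := by
    intro t ht
    have ht : t ≤ s := Nat.lt_succ_iff.mp (mem_range.mp ht)
    have hmax : max (max (t : ℝ) (s - t) - (s - n)) 0 ≤ g t + g (s - t) := by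
      simp only [g, Nat.cast_sub ht]
      refine max_le (sub_le_iff_le_add.mpr (max_le ?_ ?_))
        (add_nonneg (le_max_right _ _) (le_max_right _ _)) <;>
        linarith [le_max_left ((n : ℝ) - t) 0, le_max_right ((n : ℝ) - t) 0,
          le_max_left ((n : ℝ) - (s - t)) 0, le_max_right ((n : ℝ) - (s - t)) 0]
    calc (max (t : ℝ) (s - t) - (s - n)) * s.choose t * ν t
        = (max (t : ℝ) (s - t) - (s - n)) * (s.choose t * ν t) := by ring
      _ ≤ max (max (t : ℝ) (s - t) - (s - n)) 0 * (s.choose t / 2 ^ s) :=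
          le_max_zero_mul (by have := hν0 t ht; positivity)
            (by have := hν1 t ht; rw [div_eq_mul_one_div]; gcongr)
      _ ≤ (g t + g (s - t)) * s.choose t / 2 ^ s := by
          rw [mul_div_assoc]; gcongr
  calc ∑ t ∈ range (s + 1), max (t : ℝ) (s - t) * s.choose t * ν t
      = (s - n) * γ + ∑ t ∈ range (s + 1), (max (t : ℝ) (s - t) - (s - n)) * s.choose t * ν t := by
        rw [← hsum, mul_sum, ← sum_add_distrib]
        exact sum_congr rfl fun t _ => by ring
    _ ≤ (s - n) * γ + ∑ t ∈ range (s + 1), (g t + g (s - t)) * s.choose t / 2 ^ s := by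
        gcongr with t ht
        exact hpoint t ht
    _ = (s - n) * γ + 2 * ∑ t ∈ range n, ((n : ℝ) - t) * s.choose t / 2 ^ s := by
        simp only [add_mul, ← sum_div, sum_add_distrib]
        rw [sum_range_succ_mul_choose_reflect s g, sum_range_succ_max_sub_mul_choose]
        ring

theorem cast_mul_binomCDF_bound_eq {s : ℕ} (hs : 0 < s) (n : ℕ) (γ : ℝ) :
    (s : ℝ) * (binomCDF (s - 1) ((n : ℤ) - 1) +
        ((s : ℝ) - n) / s * (γ - 2 * binomCDF s ((n : ℤ) - 1))) =
      (s - n) * γ + 2 * ∑ t ∈ range n, ((n : ℝ) - t) * s.choose t / 2 ^ s := by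
  have hpow : (2 : ℝ) ^ s = 2 * 2 ^ (s - 1) := by
    rw [← pow_succ', Nat.sub_add_cancel hs]
  have hsplit : ∑ t ∈ range n, ((s : ℝ) - t) * s.choose t =
      ∑ t ∈ range n, ((n : ℝ) - t) * s.choose t + (s - n) * ∑ t ∈ range n, (s.choose t : ℝ) := by
    rw [mul_sum, ← sum_add_distrib]
    exact sum_congr rfl fun t _ => by ring
  simp only [binomCDF_natCast_sub_one, ← sum_div]
  rw [mul_add, ← mul_div_assoc, mul_sum]
  simp only [cast_mul_choose_sub_one hs, hsplit]
  rw [hpow]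
  field_simp
  ring

theorem stmt1_general (s : ℕ) (hs : 2 ≤ s) (γ : ℝ)
    (ν : ℕ → ℝ)
    (hν0 : ∀ t ≤ s, 0 ≤ ν t) (hν1 : ∀ t ≤ s, ν t ≤ 1 / 2 ^ s)
    (hsum : ∑ t ∈ Finset.range (s + 1), (s.choose t : ℝ) * ν t = γ)
    (r : ℤ) (hr : -1 ≤ r) :
    ∑ t ∈ Finset.range (s / 2 + 1), ((s - 1).choose t : ℝ) * ν t +
      ∑ t ∈ Finset.Icc (s / 2 + 1) s, ((s - 1).choose (t - 1) : ℝ) * ν t ≤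
    binomCDF (s - 1) r + ((s : ℝ) - r - 1) / s * (γ - 2 * binomCDF s r) := by
  obtain ⟨n, rfl⟩ : ∃ n : ℕ, r = n - 1 := ⟨(r + 1).toNat, by omega⟩
  have hs0 : 0 < s := by omega
  have hcoeff : (s : ℝ) - ((n - 1 : ℤ) : ℝ) - 1 = s - n := by push_cast; ring
  rw [hcoeff]
  refine le_of_mul_le_mul_left ?_ (Nat.cast_pos.mpr hs0 : (0 : ℝ) < s)
  rw [cast_mul_objective_eq hs0, cast_mul_binomCDF_bound_eq hs0]
  exact sum_max_mul_choose_mul_le n hν0 hν1 hsum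

theorem stmt1 (s : ℕ) (hs : 2 ≤ s) (γ : ℝ) (hγ0 : 0 < γ) (hγ1 : γ ≤ 1)
    (ν : ℕ → ℝ)
    (hν0 : ∀ t ≤ s, 0 ≤ ν t) (hν1 : ∀ t ≤ s, ν t ≤ 1 / 2 ^ s)
    (hsum : ∑ t ∈ Finset.range (s + 1), (s.choose t : ℝ) * ν t = γ)
    (r : ℤ) (hr : -1 ≤ r)
    (hr1 : binomCDF s r ≤ γ / 2) (hr2 : γ / 2 < binomCDF s (r + 1)) :
    ∑ t ∈ Finset.range (s / 2 + 1), ((s - 1).choose t : ℝ) * ν t +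
      ∑ t ∈ Finset.Icc (s / 2 + 1) s, ((s - 1).choose (t - 1) : ℝ) * ν t ≤
    binomCDF (s - 1) r + ((s : ℝ) - r - 1) / s * (γ - 2 * binomCDF s r) :=
  stmt1_general s hs γ ν hν0 hν1 hsum r hr
end

section
/- Let L be a positive integer, 𝒦 a finite set of keys, s and S integers with 2 ≤ s ≤ S ≤ |𝒦|, W ≥ 0 a real number, and a : 𝒦 → Fin L → {0,1} a family of binary sequences such that for all distinct keys k₁,…,k_s ∈ 𝒦 and all bits b₁,…,b_s ∈ {0,1}, the pattern count #{i ∈ Fin L : a(k₁)(i)=b₁, …, a(k_s)(i)=b_s} is at most L/2^s + W. Set L′ = L + 2^s·W and, for a real γ with 0 < γ ≤ 1 such that n = γL is an integer, set γ′ = γ·L/L′. Define ν* to be the supremum of F(ν) = ∑_{t=0}^{⌊S/2⌋} C(S−1,t)·ν_t + ∑_{t=⌊S/2⌋+1}^{S} C(S−1,t−1)·ν_t over all ν = (ν₀,…,ν_S) ∈ ℝ^{S+1} satisfying ν_t ≥ 0 for all t, ν_t = ν_{S−t} for all t, ∑_{t=0}^{S} C(S,t)·ν_t = γ′, and ∑_{t=0}^{S−s}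 C(S−s,t)·ν_{h+t} ≤ 2^{−s} for every h = 0,…,s. Then for every T ⊆ Fin L with |T| = n and every guessing function g : Fin L → {0,1}, the number of keys k ∈ 𝒦 with #{i ∈ T : g(i) = a(k)(i)} > ν*·L′ is at most S − 1; equivalently, a uniformly random key k satisfies #{i ∈ T : g(i) = a(k)(i)} ≤ ν*·L′ with probability at least 1 − S/|𝒦|. -/
/-!
Suppose `S` keys each agree with `g` on more than `ν* L'` positions of `T`. For a position `i`
let `c i` be the number of these keys agreeing with `g` at `i`, and `m t` the number of positions
of `T` with `c i = t`. Then `ν t = (m t + m (S - t)) / (2 C(S, t) L')` is feasible for the linear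
program, with mass `#T / L' = γ'`. The window constraint at `h` is a double count. Up to the factor
`C(S, h) C(S - h, s - h)`, the window sum counts triples `(i, A, B)` where the `h` keys of `A`
agree and the `s - h` keys of `B` disagree with `g` at `i`. Together, the triples for `(A, B)` and
for `(B, A)` are the positions where the keys of `A ∪ B` show the bit pattern `1_A` or `1_B`, and
there are at most `2 L' / 2^s` of those. The objective value of `ν` is
`∑ max(t, S - t) m t / (S L')`. This is at least `∑ c i / (S L')`, the average agreement of the `S`
keys divided by `L'`, which exceeds `ν*`.
-/

open Finset

namespace Nat

theorem choose_mul_choose_sub_eq_zero {n a b : ℕ} (h : n < a + b) :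
    n.choose a * (n - a).choose b = 0 := by
  rcases le_or_gt a n with ha | ha
  · simp [choose_eq_zero_of_lt (show n - a < b by omega)]
  · simp [choose_eq_zero_of_lt ha]

theorem choose_mul_choose_sub_comm (n a b : ℕ) :
    n.choose a * (n - a).choose b = n.choose b * (n - b).choose a := by
  rcases le_or_gt (a + b) n with h | h
  · have ha := choose_mul (n := n) (Nat.le_add_right a b)
    have hb := choose_mul (n := n) (Nat.le_add_left b a)
    rw [Nat.add_sub_cancel_left, choose_symm_add] at ha
    rw [Nat.add_sub_cancel] at hb
    rw [← ha, ← hb]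
  · rw [choose_mul_choose_sub_eq_zero h, choose_mul_choose_sub_eq_zero (by omega)]

theorem choose_add_mul_choose_mul_choose_sub (n h k t : ℕ) :
    n.choose (h + t) * (h + t).choose h * (n - (h + t)).choose k =
      n.choose h * (n - h).choose k * (n - (h + k)).choose t := by
  have hmul := choose_mul (n := n) (Nat.le_add_right h t)
  rw [Nat.add_sub_cancel_left] at hmul
  rw [hmul, Nat.mul_assoc, ← Nat.sub_sub, choose_mul_choose_sub_comm, Nat.sub_sub,
    Nat.mul_assoc]

end Nat

section LinearProgram

variable {S : ℕ}

def lpObjective (S : ℕ) (ν : ℕ → ℝ) : ℝ :=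
  ∑ t ∈ range (S / 2 + 1), ((S - 1).choose t : ℝ) * ν t +
    ∑ t ∈ Icc (S / 2 + 1) S, ((S - 1).choose (t - 1) : ℝ) * ν t

noncomputable def lpValue (S s : ℕ) (γ' : ℝ) : ℝ :=
  sSup {x : ℝ | ∃ ν : ℕ → ℝ,
      (∀ t ≤ S, 0 ≤ ν t) ∧
      (∀ t ≤ S, ν t = ν (S - t)) ∧
      (∑ t ∈ range (S + 1), (S.choose t : ℝ) * ν t = γ') ∧
      (∀ h ≤ s, ∑ t ∈ range (S - s + 1), ((S - s).choose t : ℝ) * ν (h + t) ≤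
        1 / 2 ^ s) ∧
      x = lpObjective S ν}

/-- The two halves of the objective are one sum: `C(S-1, t) = C(S, t) (S - t) / S` and
`C(S-1, t-1) = C(S, t) t / S`. -/
theorem lpObjective_eq_sum (hS : 0 < S) (ν : ℕ → ℝ) :
    lpObjective S ν = ∑ t ∈ range (S + 1), (S.choose t : ℝ) * (max t (S - t) / S) * ν t := by
  obtain ⟨n, rfl⟩ : ∃ n, S = n + 1 := ⟨S - 1, by omega⟩
  have hS : ((n + 1 : ℕ) : ℝ) ≠ 0 := by positivity
  have low : ∀ t ∈ range ((n + 1) / 2 + 1), ((n + 1 - 1).choose t : ℝ) * ν t =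
      ((n + 1).choose t : ℝ) * (max t (n + 1 - t) / (n + 1 : ℕ)) * ν t := by
    intro t ht
    have hmax : max t (n + 1 - t) = n + 1 - t := max_eq_right (by grind)
    have hc : (n.choose t : ℝ) * (n + 1 : ℕ) = (n + 1).choose t * (n + 1 - t : ℕ) := by
      exact_mod_cast Nat.choose_mul_succ_eq n t
    rw [hmax, Nat.add_sub_cancel]
    field_simp
    linear_combination ν t * hc
  have high : ∀ t ∈ Icc ((n + 1) / 2 + 1) (n + 1), ((n + 1 - 1).choose (t - 1) : ℝ) * ν t =
      ((n + 1).choose t : ℝ) * (max t (n + 1 - t) / (n + 1 : ℕ)) * ν t := by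
    intro t ht
    obtain ⟨u, rfl⟩ : ∃ u, t = u + 1 := ⟨t - 1, by grind⟩
    have hmax : max (u + 1) (n + 1 - (u + 1)) = u + 1 := max_eq_left (by grind)
    have hc : ((n + 1 : ℕ) : ℝ) * n.choose u = (n + 1).choose (u + 1) * (u + 1 : ℕ) := by
      exact_mod_cast Nat.add_one_mul_choose_eq n u
    rw [hmax, Nat.add_sub_cancel, Nat.add_sub_cancel]
    field_simp
    linear_combination ν (u + 1) * hc
  rw [lpObjective, sum_congr rfl low, sum_congr rfl high, range_eq_Ico, range_eq_Ico,
    ← Ico_add_one_right_eq_Icc, sum_Ico_consecutive _ (by omega) (by omega)]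

theorem lpObjective_le_lpValue (hS : 0 < S) {s : ℕ} {ν : ℕ → ℝ} {γ' : ℝ}
    (hν0 : ∀ t ≤ S, 0 ≤ ν t) (hνsymm : ∀ t ≤ S, ν t = ν (S - t))
    (hmass : ∑ t ∈ range (S + 1), (S.choose t : ℝ) * ν t = γ')
    (hwindow : ∀ h ≤ s, ∑ t ∈ range (S - s + 1), ((S - s).choose t : ℝ) * ν (h + t) ≤
      1 / 2 ^ s) :
    lpObjective S ν ≤ lpValue S s γ' := by
  refine le_csSup ⟨γ', ?_⟩ ⟨ν, hν0, hνsymm, hmass, hwindow, rfl⟩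
  rintro _ ⟨μ, hμ0, -, rfl, -, rfl⟩
  rw [lpObjective_eq_sum hS]
  refine sum_le_sum fun t ht => ?_
  have ht : t ≤ S := Nat.lt_succ_iff.mp (mem_range.mp ht)
  have hmax : ((max t (S - t) : ℕ) : ℝ) / S ≤ 1 := by
    rw [div_le_one (by positivity)]
    exact_mod_cast max_le ht (Nat.sub_le S t)
  have hcoef : (0 : ℝ) ≤ S.choose t * μ t := mul_nonneg (by positivity) (hμ0 t ht)
  linear_combination mul_le_mul_of_nonneg_left hmax hcoef

end LinearProgram

section Profile

variable {S s : ℕ} (μ : ℕ → ℝ)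

noncomputable def symmProfile (S : ℕ) (μ : ℕ → ℝ) (t : ℕ) : ℝ :=
  (μ t + μ (S - t)) / (2 * S.choose t)

noncomputable def windowSum (S s : ℕ) (μ : ℕ → ℝ) (h : ℕ) : ℝ :=
  ∑ t ∈ range (S - s + 1), ((S - s).choose t : ℝ) * μ (h + t) / S.choose (h + t)

theorem symmProfile_nonneg (hμ : ∀ t, 0 ≤ μ t) (t : ℕ) : 0 ≤ symmProfile S μ t :=
  div_nonneg (add_nonneg (hμ t) (hμ (S - t))) (by positivity)

theorem symmProfile_sub {t : ℕ} (ht : t ≤ S) : symmProfile S μ (S - t) = symmProfile S μ t := by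
  rw [symmProfile, symmProfile, Nat.sub_sub_self ht, Nat.choose_symm ht, add_comm]

theorem sum_mul_choose_mul_symmProfile (c : ℕ → ℝ) (hc : ∀ t ≤ S, c (S - t) = c t) :
    ∑ t ∈ range (S + 1), c t * (S.choose t * symmProfile S μ t) =
      ∑ t ∈ range (S + 1), c t * μ t := by
  have hterm : ∀ t ∈ range (S + 1), c t * (S.choose t * symmProfile S μ t) =
      (c t * μ t + c (S - t) * μ (S - t)) / 2 := by
    intro t ht
    have ht : t ≤ S := Nat.lt_succ_iff.mp (mem_range.mp ht)
    have hC : (S.choose t : ℝ) ≠ 0 := by exact_mod_cast (Nat.choose_pos ht).ne'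
    rw [symmProfile, hc t ht]
    field_simp
  rw [sum_congr rfl hterm, ← sum_div, sum_add_distrib]
  have hreflect := sum_range_reflect (fun t => c t * μ t) (S + 1)
  rw [Nat.add_sub_cancel] at hreflect
  rw [hreflect]
  ring

theorem lpObjective_symmProfile (hS : 0 < S) :
    lpObjective S (symmProfile S μ) = ∑ t ∈ range (S + 1), (max t (S - t) / S : ℝ) * μ t := by
  rw [lpObjective_eq_sum hS, ← sum_mul_choose_mul_symmProfile μ]
  · exact sum_congr rfl fun t _ => by ring
  · intro t ht
    rw [Nat.sub_sub_self ht, max_comm]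

theorem sum_choose_mul_symmProfile_add {h : ℕ} (hh : h ≤ s) (hsS : s ≤ S) :
    ∑ t ∈ range (S - s + 1), ((S - s).choose t : ℝ) * symmProfile S μ (h + t) =
      (windowSum S s μ h + windowSum S s μ (s - h)) / 2 := by
  have hreflect : ∑ t ∈ range (S - s + 1),
      ((S - s).choose t : ℝ) * μ (S - (h + t)) / S.choose (h + t) = windowSum S s μ (s - h) := by
    rw [windowSum, ← sum_range_reflect]
    refine sum_congr rfl fun t ht => ?_
    have ht : t ≤ S - s := Nat.lt_succ_iff.mp (mem_range.mp ht)
    rw [Nat.add_sub_cancel, Nat.choose_symm ht, show S - (h + (S - s - t)) = s - h + t by omega,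
      show h + (S - s - t) = S - (s - h + t) by omega, Nat.choose_symm (by omega)]
  rw [← hreflect, windowSum, ← sum_add_distrib, sum_div]
  refine sum_congr rfl fun t _ => ?_
  rw [symmProfile]
  ring

theorem choose_mul_choose_mul_windowSum {h k : ℕ} (hS : h + k ≤ S) :
    (S.choose h * (S - h).choose k : ℝ) * windowSum S (h + k) μ h =
      ∑ t ∈ range (S + 1), μ t * (t.choose h * (S - t).choose k : ℝ) := by
  set f : ℕ → ℝ := fun t => μ t * (t.choose h * (S - t).choose k : ℝ)
  have hterm : ∀ t ∈ range (S - (h + k) + 1), (S.choose h * (S - h).choose k : ℝ) *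
      (((S - (h + k)).choose t : ℝ) * μ (h + t) / S.choose (h + t)) = f (h + t) := by
    intro t ht
    have ht : t ≤ S - (h + k) := Nat.lt_succ_iff.mp (mem_range.mp ht)
    have hC : (S.choose (h + t) : ℝ) ≠ 0 := by exact_mod_cast (Nat.choose_pos (by omega)).ne'
    have hid : (S.choose (h + t) * (h + t).choose h * (S - (h + t)).choose k : ℝ) =
        S.choose h * (S - h).choose k * (S - (h + k)).choose t := by
      exact_mod_cast Nat.choose_add_mul_choose_mul_choose_sub S h k t
    field_simp
    linear_combination μ (h + t) * hid.symm
  have hvanish : ∀ t ∈ range (S + 1), t ∉ Ico h (h + (S - (h + k) + 1)) → f t = 0 := by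
    intro t ht hnot
    rcases lt_or_ge t h with hlt | hge
    · simp [f, Nat.choose_eq_zero_of_lt hlt]
    · have : S - t < k := by
        have := mem_range.mp ht
        have := mt (mem_Ico.mpr ⟨hge, ·⟩) hnot
        omega
      simp [f, Nat.choose_eq_zero_of_lt this]
  have hshift : ∑ t ∈ range (S - (h + k) + 1), f (h + t) =
      ∑ t ∈ Ico h (h + (S - (h + k) + 1)), f t := by
    rw [sum_Ico_eq_sum_range, Nat.add_sub_cancel_left]
  have hsub : Ico h (h + (S - (h + k) + 1)) ⊆ range (S + 1) := fun t ht => by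
    simp only [mem_Ico, mem_range] at ht ⊢
    omega
  rw [windowSum, mul_sum, sum_congr rfl hterm, hshift, sum_subset hsub hvanish]

theorem windowSum_div (c : ℝ) (h : ℕ) :
    windowSum S s (fun t => μ t / c) h = windowSum S s μ h / c := by
  rw [windowSum, windowSum, sum_div]
  exact sum_congr rfl fun t _ => by ring

end Profile

section DisjointPairs

variable (α : Type*) [Fintype α] [DecidableEq α]

def disjointPairs (h k : ℕ) : Finset (Finset α × Finset α) :=
  {p ∈ powersetCard h univ ×ˢ powersetCard k univ | Disjoint p.1 p.2}

variable {α}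

theorem mem_disjointPairs {h k : ℕ} {p : Finset α × Finset α} :
    p ∈ disjointPairs α h k ↔ #p.1 = h ∧ #p.2 = k ∧ Disjoint p.1 p.2 := by
  simp [disjointPairs, mem_powersetCard, and_assoc]

theorem swap_mem_disjointPairs {h k : ℕ} {p : Finset α × Finset α} :
    p.swap ∈ disjointPairs α k h ↔ p ∈ disjointPairs α h k := by
  simp only [mem_disjointPairs, Prod.fst_swap, Prod.snd_swap, disjoint_comm]
  tauto

theorem card_disjointPairs (h k : ℕ) :
    #(disjointPairs α h k) = (Fintype.card α).choose h * (Fintype.card α - h).choose k := by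
  have hinner : ∀ A ∈ powersetCard h (univ : Finset α),
      #{B ∈ powersetCard k (univ : Finset α) | Disjoint A B} = (Fintype.card α - h).choose k := by
    intro A hA
    have hfilter : {B ∈ powersetCard k (univ : Finset α) | Disjoint A B} = Aᶜ.powersetCard k := by
      ext B
      simp [mem_powersetCard, subset_compl_iff_disjoint_left, and_comm]
    rw [hfilter, card_powersetCard, card_compl, (mem_powersetCard.mp hA).2]
  rw [disjointPairs, card_filter, sum_product]
  simp_rw [← card_filter]
  rw [sum_congr rfl hinner, sum_const, card_powersetCard, card_univ, smul_eq_mul]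

theorem filter_disjointPairs_subset_compl (X : Finset α) (h k : ℕ) :
    {p ∈ disjointPairs α h k | p.1 ⊆ X ∧ p.2 ⊆ Xᶜ} = X.powersetCard h ×ˢ Xᶜ.powersetCard k := by
  ext ⟨A, B⟩
  simp only [mem_filter, mem_disjointPairs, mem_product, mem_powersetCard]
  constructor
  · rintro ⟨⟨hA, hB, -⟩, hAX, hBX⟩
    exact ⟨⟨hAX, hA⟩, hBX, hB⟩
  · rintro ⟨⟨hAX, hA⟩, hBX, hB⟩
    exact ⟨⟨hA, hB, disjoint_of_subset_left hAX (subset_compl_iff_disjoint_right.mp hBX).symm⟩,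
      hAX, hBX⟩

end DisjointPairs

theorem card_filter_pattern_le {ι κ : Type*} [Fintype ι] [DecidableEq κ] (y : κ → ι → Bool)
    {s : ℕ} {P : ℝ}
    (hpatt : ∀ ks : Fin s → κ, Function.Injective ks → ∀ b : Fin s → Bool,
      (#{i | ∀ j, y (ks j) i = b j} : ℝ) ≤ P)
    {A B : Finset κ} (hAB : Disjoint A B) (hcard : #A + #B = s) :
    (#{i | (∀ j ∈ A, y j i = true) ∧ ∀ j ∈ B, y j i = false} : ℝ) ≤ P := by
  set e := (A ∪ B).equivFinOfCardEq (by rw [card_union_of_disjoint hAB, hcard])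
  set ks : Fin s → κ := fun j => e.symm j
  have hrange : ∀ q : κ → Prop, (∀ j ∈ A ∪ B, q j) ↔ ∀ k, q (ks k) := fun q =>
    ⟨fun hq k => hq _ (e.symm k).2, fun hq j hj => by simpa [ks] using hq (e ⟨j, hj⟩)⟩
  have hpattern : ∀ i, ((∀ j ∈ A, y j i = true) ∧ ∀ j ∈ B, y j i = false) ↔
      ∀ k, y (ks k) i = decide (ks k ∈ A) := by
    intro i
    rw [← hrange fun j => y j i = decide (j ∈ A), forall_mem_union]
    exact and_congr (forall₂_congr fun j hj => by simp [hj])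
      (forall₂_congr fun j hj => by simp [disjoint_right.mp hAB hj])
  simpa only [hpattern] using
    hpatt ks (Subtype.val_injective.comp e.symm.injective) fun j => decide (ks j ∈ A)

section Agreement

variable {ι : Type*} {S : ℕ} (x : Fin S → ι → Bool) (g : ι → Bool) (T : Finset ι)

def agreeSet (i : ι) : Finset (Fin S) := {j | g i = x j i}

def agreeProfile (t : ℕ) : ℕ := #{i ∈ T | #(agreeSet x g i) = t}

def agreeDisagreeCount (A B : Finset (Fin S)) : ℕ :=
  #{i ∈ T | A ⊆ agreeSet x g i ∧ B ⊆ (agreeSet x g i)ᶜ}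

theorem sum_agreeProfile_mul (ψ : ℕ → ℝ) :
    ∑ t ∈ range (S + 1), (agreeProfile x g T t : ℝ) * ψ t = ∑ i ∈ T, ψ #(agreeSet x g i) := by
  have hmaps : ∀ i ∈ T, #(agreeSet x g i) ∈ range (S + 1) := fun i _ =>
    mem_range.mpr (Nat.lt_succ_of_le ((card_le_univ _).trans_eq (Fintype.card_fin S)))
  rw [← sum_fiberwise_of_maps_to hmaps]
  refine sum_congr rfl fun t _ => ?_
  rw [sum_congr rfl fun i hi => by rw [(mem_filter.mp hi).2], sum_const, nsmul_eq_mul,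
    agreeProfile]

theorem sum_card_agreeSet : ∑ i ∈ T, #(agreeSet x g i) = ∑ j, #{i ∈ T | g i = x j i} :=
  sum_card_bipartiteAbove_eq_sum_card_bipartiteBelow (r := fun i j => g i = x j i)

theorem subset_agreeSet_and_subset_compl_iff {A B : Finset (Fin S)} {i : ι} :
    A ⊆ agreeSet x g i ∧ B ⊆ (agreeSet x g i)ᶜ ↔
      (∀ j ∈ A, x j i = g i) ∧ ∀ j ∈ B, x j i = !g i := by
  simp [subset_iff, agreeSet, eq_comm, Bool.eq_not]

/-- If `g i = true` the two sides match term by term, if `g i = false` crosswise. -/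
theorem agreeDisagreeCount_add_swap (A B : Finset (Fin S)) :
    agreeDisagreeCount x g T A B + agreeDisagreeCount x g T B A =
      #{i ∈ T | (∀ j ∈ A, x j i = true) ∧ ∀ j ∈ B, x j i = false} +
        #{i ∈ T | (∀ j ∈ B, x j i = true) ∧ ∀ j ∈ A, x j i = false} := by
  simp only [agreeDisagreeCount, card_filter, ← sum_add_distrib,
    subset_agreeSet_and_subset_compl_iff]
  refine sum_congr rfl fun i _ => ?_
  obtain ⟨b, hb⟩ : ∃ b, g i = b := ⟨_, rfl⟩
  cases b
  · simp only [hb, Bool.not_false, add_comm, and_comm]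
  · simp only [hb, Bool.not_true]

theorem agreeDisagreeCount_add_swap_le [Fintype ι] {s : ℕ} {P : ℝ}
    (hpatt : ∀ A B : Finset (Fin S), Disjoint A B → #A + #B = s →
      (#{i | (∀ j ∈ A, x j i = true) ∧ ∀ j ∈ B, x j i = false} : ℝ) ≤ P)
    {A B : Finset (Fin S)} (hAB : Disjoint A B) (hcard : #A + #B = s) :
    (agreeDisagreeCount x g T A B + agreeDisagreeCount x g T B A : ℝ) ≤ 2 * P := by
  have hrestrict : ∀ (q : ι → Prop) [DecidablePred q], #{i ∈ T | q i} ≤ #{i | q i} :=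
    fun _ _ => card_le_card (filter_subset_filter _ (subset_univ T))
  have hle : agreeDisagreeCount x g T A B + agreeDisagreeCount x g T B A ≤
      #{i | (∀ j ∈ A, x j i = true) ∧ ∀ j ∈ B, x j i = false} +
        #{i | (∀ j ∈ B, x j i = true) ∧ ∀ j ∈ A, x j i = false} := by
    rw [agreeDisagreeCount_add_swap]
    exact add_le_add (hrestrict _) (hrestrict _)
  have hle' := (Nat.cast_le (α := ℝ)).mpr hle
  push_cast at hle'
  linarith [hpatt A B hAB hcard, hpatt B A hAB.symm (by omega)]

theorem sum_choose_mul_choose_card_agreeSet (h k : ℕ) :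
    ∑ i ∈ T, (#(agreeSet x g i)).choose h * (S - #(agreeSet x g i)).choose k =
      ∑ p ∈ disjointPairs (Fin S) h k, agreeDisagreeCount x g T p.1 p.2 := by
  have hfiber : ∀ i, (#(agreeSet x g i)).choose h * (S - #(agreeSet x g i)).choose k =
      #{p ∈ disjointPairs (Fin S) h k | p.1 ⊆ agreeSet x g i ∧ p.2 ⊆ (agreeSet x g i)ᶜ} := by
    intro i
    rw [filter_disjointPairs_subset_compl, card_product, card_powersetCard, card_powersetCard,
      card_compl, Fintype.card_fin]
  simp only [hfiber, agreeDisagreeCount, card_filter]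
  exact sum_comm

theorem windowSum_add_windowSum_le [Fintype ι] {s h : ℕ} {P : ℝ}
    (hpatt : ∀ A B : Finset (Fin S), Disjoint A B → #A + #B = s →
      (#{i | (∀ j ∈ A, x j i = true) ∧ ∀ j ∈ B, x j i = false} : ℝ) ≤ P)
    (hh : h ≤ s) (hsS : s ≤ S) :
    windowSum S s (fun t => agreeProfile x g T t) h +
      windowSum S s (fun t => agreeProfile x g T t) (s - h) ≤ 2 * P := by
  obtain ⟨k, rfl⟩ : ∃ k, s = h + k := ⟨s - h, by omega⟩
  set N := agreeDisagreeCount x g T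
  have hcount : ∀ a b, a + b ≤ S → (S.choose a * (S - a).choose b : ℝ) *
      windowSum S (a + b) (fun t => agreeProfile x g T t) a =
      ∑ p ∈ disjointPairs (Fin S) a b, (N p.1 p.2 : ℝ) := by
    intro a b hab
    rw [choose_mul_choose_mul_windowSum _ hab, sum_agreeProfile_mul]
    exact_mod_cast sum_choose_mul_choose_card_agreeSet x g T a b
  have hswap : ∑ p ∈ disjointPairs (Fin S) k h, (N p.1 p.2 : ℝ) =
      ∑ p ∈ disjointPairs (Fin S) h k, (N p.2 p.1 : ℝ) :=
    sum_nbij' Prod.swap Prod.swap (fun _ hp => swap_mem_disjointPairs.mpr hp)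
      (fun _ hp => swap_mem_disjointPairs.mpr hp) (fun _ _ => rfl) (fun _ _ => rfl)
      (fun _ _ => rfl)
  have hpair : ∀ p ∈ disjointPairs (Fin S) h k, (N p.1 p.2 + N p.2 p.1 : ℝ) ≤ 2 * P := by
    intro p hp
    obtain ⟨hA, hB, hAB⟩ := mem_disjointPairs.mp hp
    exact agreeDisagreeCount_add_swap_le x g T hpatt hAB (by omega)
  have hM : (0 : ℝ) < S.choose h * (S - h).choose k := by
    have := Nat.choose_pos (show h ≤ S by omega)
    have := Nat.choose_pos (show k ≤ S - h by omega)
    positivity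
  have hcomm : (S.choose k * (S - k).choose h : ℝ) = S.choose h * (S - h).choose k := by
    exact_mod_cast Nat.choose_mul_choose_sub_comm S k h
  have hsum := sum_le_card_nsmul _ _ _ hpair
  rw [card_disjointPairs, Fintype.card_fin, nsmul_eq_mul, sum_add_distrib, ← hswap,
    ← hcount h k hsS, ← hcount k h (by omega), hcomm, add_comm k h, ← mul_add] at hsum
  rw [Nat.add_sub_cancel_left]
  push_cast at hsum
  exact le_of_mul_le_mul_left hsum hM

theorem sum_card_agree_le_mul_lpValue [Fintype ι] {s : ℕ} {L' : ℝ} (hS : 0 < S) (hsS : s ≤ S)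
    (hL' : 0 < L')
    (hpatt : ∀ A B : Finset (Fin S), Disjoint A B → #A + #B = s →
      (#{i | (∀ j ∈ A, x j i = true) ∧ ∀ j ∈ B, x j i = false} : ℝ) ≤ L' / 2 ^ s) :
    ∑ j, (#{i ∈ T | g i = x j i} : ℝ) ≤ S * L' * lpValue S s (#T / L') := by
  set μ : ℕ → ℝ := fun t => agreeProfile x g T t / L'
  have hμ : ∀ t, 0 ≤ μ t := fun t => div_nonneg (Nat.cast_nonneg _) hL'.le
  have hmass : ∑ t ∈ range (S + 1), (S.choose t : ℝ) * symmProfile S μ t = #T / L' := by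
    have hsum := sum_mul_choose_mul_symmProfile (S := S) μ (fun _ => 1) fun _ _ => rfl
    simp only [one_mul] at hsum
    rw [hsum, ← sum_div]
    congr 1
    simpa using sum_agreeProfile_mul x g T fun _ => 1
  have hwindow : ∀ h ≤ s, ∑ t ∈ range (S - s + 1), ((S - s).choose t : ℝ) *
      symmProfile S μ (h + t) ≤ 1 / 2 ^ s := by
    intro h hh
    rw [sum_choose_mul_symmProfile_add μ hh hsS, windowSum_div, windowSum_div, ← add_div, div_div,
      div_le_iff₀ (by positivity)]
    calc _ ≤ 2 * (L' / 2 ^ s) := windowSum_add_windowSum_le x g T hpatt hh hsS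
      _ = _ := by ring
  have hlp := lpObjective_le_lpValue hS (fun t _ => symmProfile_nonneg μ hμ t)
    (fun t ht => (symmProfile_sub μ ht).symm) hmass hwindow
  rw [lpObjective_symmProfile μ hS] at hlp
  have hagree : ∑ j, (#{i ∈ T | g i = x j i} : ℝ) =
      ∑ t ∈ range (S + 1), (agreeProfile x g T t : ℝ) * t := by
    rw [sum_agreeProfile_mul]
    exact_mod_cast (sum_card_agreeSet x g T).symm
  calc ∑ j, (#{i ∈ T | g i = x j i} : ℝ)
      = S * L' * ∑ t ∈ range (S + 1), (t / S : ℝ) * μ t := by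
        rw [hagree, mul_sum]
        refine sum_congr rfl fun t _ => ?_
        simp only [μ]
        field_simp
    _ ≤ S * L' * ∑ t ∈ range (S + 1), (max t (S - t) / S : ℝ) * μ t := by
        gcongr with t
        exact_mod_cast le_max_left t (S - t)
    _ ≤ S * L' * lpValue S s (#T / L') := by gcongr

end Agreement

theorem one_sub_div_le_card_subtype_not_div {α : Type*} [Fintype α] (p : α → Prop) {n : ℕ}
    (hα : 0 < Fintype.card α) (hp : Nat.card {a // p a} ≤ n) :
    1 - n / Fintype.card α ≤ (Nat.card {a // ¬p a} : ℝ) / Fintype.card α := by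
  classical
  have hcompl : Nat.card {a // ¬p a} = Fintype.card α - Nat.card {a // p a} := by
    simp only [Nat.card_eq_fintype_card, Fintype.card_subtype_compl]
  have hle : Nat.card {a // p a} ≤ Fintype.card α :=
    (Finite.card_subtype_le p).trans_eq Nat.card_eq_fintype_card
  have hpos : (0 : ℝ) < Fintype.card α := by exact_mod_cast hα
  rw [hcompl, Nat.cast_sub hle, sub_div, div_self hpos.ne']
  gcongr

theorem exists_injective_forall_of_le_nat_card {α : Type*} [Fintype α] {p : α → Prop} {n : ℕ}
    (hn : n ≤ Nat.card {a // p a}) : ∃ e : Fin n → α, Function.Injective e ∧ ∀ j, p (e j) := by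
  classical
  obtain ⟨e⟩ := Function.Embedding.nonempty_of_card_le (α := Fin n) (β := {a // p a})
    (by rwa [Fintype.card_fin, ← Nat.card_eq_fintype_card])
  exact ⟨fun j => e j, Subtype.val_injective.comp e.injective, fun j => (e j).2⟩

theorem nat_card_lpValue_mul_lt_card_agree_lt {K ι : Type*} [Fintype K] [Fintype ι]
    (a : K → ι → Bool) {s S : ℕ} {L' : ℝ} (hS : 0 < S) (hsS : s ≤ S) (hL' : 0 < L')
    (hpatt : ∀ ks : Fin s → K, Function.Injective ks → ∀ b : Fin s → Bool,
      (#{i | ∀ j, a (ks j) i = b j} : ℝ) ≤ L' / 2 ^ s)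
    (T : Finset ι) (g : ι → Bool) :
    Nat.card {k // lpValue S s (#T / L') * L' < #{i ∈ T | g i = a k i}} < S := by
  by_contra! hle
  obtain ⟨e, he, hbad⟩ := exists_injective_forall_of_le_nat_card hle
  have hupper := sum_card_agree_le_mul_lpValue (fun j => a (e j)) g T hS hsS hL'
    fun A B hAB hcard => by
      -- over `Fin S`, the instance deciding `∀ j ∈ A` is not the generic one
      convert card_filter_pattern_le (fun j => a (e j)) (fun ks hks b => hpatt _ (he.comp hks) b)
        hAB hcard
  have hlower : (S : ℝ) * (lpValue S s (#T / L') * L') < ∑ j, (#{i ∈ T | g i = a (e j) i} : ℝ) := by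
    simpa using sum_lt_sum_of_nonempty ⟨⟨0, hS⟩, mem_univ _⟩ fun j _ => hbad j
  linarith

theorem stmt3_general {K : Type*} [Fintype K] (L : ℕ) (hL : 0 < L)
    (s S : ℕ) (hs2 : 2 ≤ s) (hsS : s ≤ S) (hSK : S ≤ Fintype.card K)
    (W : ℝ) (hW : 0 ≤ W)
    (a : K → Fin L → Bool)
    (hpatt : ∀ ks : Fin s → K, Function.Injective ks → ∀ b : Fin s → Bool,
      ((Finset.univ.filter (fun i : Fin L => ∀ j, a (ks j) i = b j)).card : ℝ) ≤
        L / 2 ^ s + W)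
    (γ : ℝ)
    (n : ℕ) (hn : (n : ℝ) = γ * L)
    (L' γ' : ℝ) (hL' : L' = L + 2 ^ s * W) (hγ' : γ' = γ * L / L')
    (νstar : ℝ)
    (hνstar : νstar = sSup {x : ℝ | ∃ ν : ℕ → ℝ,
      (∀ t ≤ S, 0 ≤ ν t) ∧
      (∀ t ≤ S, ν t = ν (S - t)) ∧
      (∑ t ∈ Finset.range (S + 1), (S.choose t : ℝ) * ν t = γ') ∧
      (∀ h ≤ s, ∑ t ∈ Finset.range (S - s + 1), ((S - s).choose t : ℝ) * ν (h + t) ≤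
        1 / 2 ^ s) ∧
      x = ∑ t ∈ Finset.range (S / 2 + 1), ((S - 1).choose t : ℝ) * ν t +
          ∑ t ∈ Finset.Icc (S / 2 + 1) S, ((S - 1).choose (t - 1) : ℝ) * ν t}) :
    ∀ T : Finset (Fin L), T.card = n → ∀ g : Fin L → Bool,
      Nat.card {k : K //
          ((T.filter (fun i => g i = a k i)).card : ℝ) > νstar * L'} ≤ S - 1 ∧
      (Nat.card {k : K //
          ((T.filter (fun i => g i = a k i)).card : ℝ) ≤ νstar * L'} : ℝ)
          / Fintype.card K ≥ 1 - S / Fintype.card K := by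
  intro T hT g
  have hL'pos : 0 < L' := by
    have : (0 : ℝ) < L := by exact_mod_cast hL
    rw [hL']
    positivity
  have hP : L / 2 ^ s + W = L' / 2 ^ s := by
    rw [hL']
    field_simp
  have hν : lpValue S s (#T / L') = νstar := by rw [hT, hn, ← hγ', hνstar]; rfl
  have hbad := nat_card_lpValue_mul_lt_card_agree_lt a (by omega) hsS hL'pos
    (fun ks hks b => hP ▸ hpatt ks hks b) T g
  rw [hν] at hbad
  refine ⟨Nat.le_sub_one_of_lt hbad, ?_⟩
  simpa only [gt_iff_lt, not_lt, ge_iff_le] using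
    one_sub_div_le_card_subtype_not_div _ (by omega) hbad.le

theorem stmt3 {K : Type*} [Fintype K] (L : ℕ) (hL : 0 < L)
    (s S : ℕ) (hs2 : 2 ≤ s) (hsS : s ≤ S) (hSK : S ≤ Fintype.card K)
    (W : ℝ) (hW : 0 ≤ W)
    (a : K → Fin L → Bool)
    (hpatt : ∀ ks : Fin s → K, Function.Injective ks → ∀ b : Fin s → Bool,
      ((Finset.univ.filter (fun i : Fin L => ∀ j, a (ks j) i = b j)).card : ℝ) ≤
        L / 2 ^ s + W)
    (γ : ℝ) (hγ0 : 0 < γ) (hγ1 : γ ≤ 1)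
    (n : ℕ) (hn : (n : ℝ) = γ * L)
    (L' γ' : ℝ) (hL' : L' = L + 2 ^ s * W) (hγ' : γ' = γ * L / L')
    (νstar : ℝ)
    (hνstar : νstar = sSup {x : ℝ | ∃ ν : ℕ → ℝ,
      (∀ t ≤ S, 0 ≤ ν t) ∧
      (∀ t ≤ S, ν t = ν (S - t)) ∧
      (∑ t ∈ Finset.range (S + 1), (S.choose t : ℝ) * ν t = γ') ∧
      (∀ h ≤ s, ∑ t ∈ Finset.range (S - s + 1), ((S - s).choose t : ℝ) * ν (h + t) ≤
        1 / 2 ^ s) ∧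
      x = ∑ t ∈ Finset.range (S / 2 + 1), ((S - 1).choose t : ℝ) * ν t +
          ∑ t ∈ Finset.Icc (S / 2 + 1) S, ((S - 1).choose (t - 1) : ℝ) * ν t}) :
    ∀ T : Finset (Fin L), T.card = n → ∀ g : Fin L → Bool,
      Nat.card {k : K //
          ((T.filter (fun i => g i = a k i)).card : ℝ) > νstar * L'} ≤ S - 1 ∧
      (Nat.card {k : K //
          ((T.filter (fun i => g i = a k i)).card : ℝ) ≤ νstar * L'} : ℝ)
          / Fintype.card K ≥ 1 - S / Fintype.card K :=
  stmt3_general L hL s S hs2 hsS hSK W hW a hpatt γ n hn L' γ' hL' hγ' νstar hνstar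
end

section
/- Fix a real number γ with 0 < γ < 1. For each integer s ≥ 2 let r_s be the unique integer ≥ −1 with P_s(r_s) ≤ γ/2 < P_s(r_s + 1). Then lim_{s→∞} [ P_{s−1}(r_s) + ((s − r_s − 1)/s)·(γ − 2·P_s(r_s)) ] = γ/2. In particular, the optimal fraction of correctly guessed elements n_correct(γ)/(γL) = (1/γ)·[P_{s−1}(r_s) + ((s−r_s−1)/s)(γ − 2P_s(r_s))] tends to 1/2 as s → ∞, as for a truly random sequence. -/
open Finset Filter

/-!
Write `b = P_s(r_s)` and `q = (s - r_s - 1)/s ∈ [0, 1]`. The expression minus `γ/2` equals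
`(P_{s-1}(r_s) - b) - (γ/2 - b) + 2q(γ/2 - b)`. Pascal's rule gives
`P_{s-1}(r) - P_s(r) = C(s-1, r)/2^s`, and the choice of `r_s` gives
`0 ≤ γ/2 - b < C(s, r_s+1)/2^s`.
Both are single binomial probabilities, hence `O(1/√s)` by the elementary bound
`(2n+1) C(2n, n)^2 ≤ 16^n`.
-/

namespace Nat

theorem sum_range_choose_le_two_pow (s n : ℕ) : ∑ j ∈ range n, s.choose j ≤ 2 ^ s :=
  calc ∑ j ∈ range n, s.choose j ≤ ∑ j ∈ range (s + 1), s.choose j :=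
        sum_le_sum_of_ne_zero fun _ _ hj ↦
          mem_range.2 (lt_succ_of_le (not_lt.1 (mt choose_eq_zero_of_lt hj)))
    _ = 2 ^ s := sum_range_choose s

theorem two_mul_add_one_mul_centralBinom_sq_le (n : ℕ) :
    (2 * n + 1) * centralBinom n ^ 2 ≤ 16 ^ n := by
  induction n with
  | zero => simp
  | succ n ih =>
    have key : (n + 1) ^ 2 * ((2 * (n + 1) + 1) * centralBinom (n + 1) ^ 2)
        ≤ (n + 1) ^ 2 * 16 ^ (n + 1) :=
      calc (n + 1) ^ 2 * ((2 * (n + 1) + 1) * centralBinom (n + 1) ^ 2)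
          = 4 * (2 * n + 3) * (2 * n + 1) * ((2 * n + 1) * centralBinom n ^ 2) := by
            rw [show (n + 1) ^ 2 * ((2 * (n + 1) + 1) * centralBinom (n + 1) ^ 2)
                = (2 * n + 3) * ((n + 1) * centralBinom (n + 1)) ^ 2 by ring,
              succ_mul_centralBinom_succ]
            ring
        _ ≤ 4 * (2 * n + 3) * (2 * n + 1) * 16 ^ n := Nat.mul_le_mul_left _ ih
        _ ≤ (n + 1) ^ 2 * 16 ^ (n + 1) := by
            rw [pow_succ 16 n, show (n + 1) ^ 2 * (16 ^ n * 16) = (n + 1) ^ 2 * 16 * 16 ^ n by ring]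
            exact Nat.mul_le_mul_right _ (by nlinarith)
    exact Nat.le_of_mul_le_mul_left key (by positivity)

theorem succ_mul_choose_sq_le (s j : ℕ) : (s + 1) * s.choose j ^ 2 ≤ 2 * 4 ^ s := by
  obtain ⟨n, rfl | rfl⟩ := s.even_or_odd'
  · have hc : (2 * n).choose j ≤ centralBinom n := choose_le_centralBinom j n
    calc (2 * n + 1) * (2 * n).choose j ^ 2 ≤ (2 * n + 1) * centralBinom n ^ 2 := by gcongr
      _ ≤ 16 ^ n := two_mul_add_one_mul_centralBinom_sq_le n
      _ ≤ 2 * 4 ^ (2 * n) := by rw [pow_mul]; norm_num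
  · have hc : (2 * n + 1).choose j ≤ 2 * centralBinom n :=
      calc (2 * n + 1).choose j ≤ (2 * n + 1).choose n := by
            simpa [show (2 * n + 1) / 2 = n by omega] using choose_le_middle j (2 * n + 1)
        _ = (2 * n).choose n + (2 * n).choose (n + 1) := by
            rw [← choose_symm_half, choose_succ_succ']
        _ ≤ 2 * centralBinom n := by
            have := choose_le_centralBinom (n + 1) n
            rw [centralBinom_eq_two_mul_choose] at *; omega
    calc (2 * n + 1 + 1) * (2 * n + 1).choose j ^ 2
          ≤ (2 * n + 1 + 1) * (2 * centralBinom n) ^ 2 := by gcongr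
      _ ≤ 8 * ((2 * n + 1) * centralBinom n ^ 2) := by
          nlinarith [Nat.zero_le (centralBinom n ^ 2)]
      _ ≤ 8 * 16 ^ n := Nat.mul_le_mul_left _ (two_mul_add_one_mul_centralBinom_sq_le n)
      _ = 2 * 4 ^ (2 * n + 1) := by rw [pow_succ, pow_mul]; ring

end Nat

theorem choose_div_two_pow_le_sqrt (s j : ℕ) :
    (s.choose j : ℝ) / 2 ^ s ≤ √(2 / (s + 1)) := by
  have h : ((s : ℝ) + 1) * (s.choose j : ℝ) ^ 2 ≤ 2 * 4 ^ s := by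
    exact_mod_cast Nat.succ_mul_choose_sq_le s j
  rw [Real.le_sqrt (by positivity) (by positivity), div_pow, ← pow_mul, mul_comm s 2, pow_mul,
    div_le_div_iff₀ (by positivity) (by positivity)]
  linarith [show ((2 : ℝ) ^ 2) ^ s = 4 ^ s by norm_num]

theorem binomCDF_natCast_s4 (s k : ℕ) :
    binomCDF s k = (∑ j ∈ range (k + 1), (s.choose j : ℝ)) / 2 ^ s := by
  simp [binomCDF]

theorem binomCDF_natCast_add_one (s k : ℕ) :
    binomCDF s ((k : ℤ) + 1) = binomCDF s k + s.choose (k + 1) / 2 ^ s := by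
  rw [← Nat.cast_add_one, binomCDF_natCast_s4, binomCDF_natCast_s4, sum_range_succ _ (k + 1), add_div]

theorem binomCDF_le_of_nonpos (s : ℕ) {t : ℤ} (ht : t ≤ 0) :
    binomCDF s t ≤ (1 / 2) ^ s := by
  rcases ht.lt_or_eq with ht | rfl
  · simp [binomCDF, ht]
  · simp [binomCDF]

theorem binomCDF_le_one (s : ℕ) (t : ℤ) : binomCDF s t ≤ 1 := by
  unfold binomCDF
  split_ifs
  · exact zero_le_one
  · rw [div_le_one (by positivity)]
    exact_mod_cast Nat.sum_range_choose_le_two_pow s _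

theorem binomCDF_natCast_of_le {s k : ℕ} (h : s ≤ k) : binomCDF s k = 1 := by
  rw [binomCDF_natCast_s4, div_eq_one_iff_eq (by positivity)]
  refine mod_cast le_antisymm (Nat.sum_range_choose_le_two_pow s _) ?_
  rw [← Nat.sum_range_choose]
  exact sum_le_sum_of_subset (range_subset_range.2 (by omega))

theorem binomCDF_sub_binomCDF_succ (m k : ℕ) :
    binomCDF m k - binomCDF (m + 1) k = m.choose k / 2 ^ (m + 1) := by
  have pascal : ∑ j ∈ range (k + 1), ((m + 1).choose j : ℝ)
      = 2 * ∑ j ∈ range (k + 1), (m.choose j : ℝ) - m.choose k := by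
    induction k with
    | zero => norm_num
    | succ k ih =>
      rw [sum_range_succ, ih, sum_range_succ _ (k + 1), Nat.choose_succ_succ', Nat.cast_add]
      ring
  rw [binomCDF_natCast_s4, binomCDF_natCast_s4, pascal, pow_succ]
  field_simp
  ring

theorem exists_natCast_eq_lt_of_binomCDF_le_lt {s : ℕ} {t : ℤ} {c : ℝ} (hc : (1 / 2) ^ s < c)
    (h₁ : binomCDF s t ≤ c) (h₂ : c < binomCDF s (t + 1)) : ∃ k : ℕ, t = k ∧ k < s := by
  have ht : 0 ≤ t := by
    by_contra! ht
    exact (h₂.trans_le (binomCDF_le_of_nonpos s (by omega))).not_gt hc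
  lift t to ℕ using ht
  refine ⟨t, rfl, ?_⟩
  by_contra! hst
  rw [binomCDF_natCast_of_le hst] at h₁
  exact (h₁.trans_lt (h₂.trans_le (binomCDF_le_one s _))).false

/-- The paper's `n_correct(γ)/L` for block length `s` and threshold `t`. -/
noncomputable def correctGuessRate (γ : ℝ) (s : ℕ) (t : ℤ) : ℝ :=
  binomCDF (s - 1) t + ((s : ℝ) - t - 1) / s * (γ - 2 * binomCDF s t)

theorem abs_correctGuessRate_sub_le {γ : ℝ} {n k : ℕ} (hk : k < n)
    (h₁ : binomCDF n k ≤ γ / 2) (h₂ : γ / 2 < binomCDF n ((k : ℤ) + 1)) :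
    |correctGuessRate γ n k - γ / 2| ≤ 3 * √(2 / n) := by
  obtain ⟨m, rfl⟩ : ∃ m, n = m + 1 := ⟨n - 1, by omega⟩
  rw [Nat.cast_add_one]
  set ε := √(2 / ((m : ℝ) + 1))
  set b := binomCDF (m + 1) k
  have hstep : binomCDF m k - b ≤ ε := by
    rw [binomCDF_sub_binomCDF_succ]
    calc (m.choose k : ℝ) / 2 ^ (m + 1) ≤ m.choose k / 2 ^ m := by
          gcongr <;> norm_num
      _ ≤ ε := choose_div_two_pow_le_sqrt m k
  have hstep₀ : 0 ≤ binomCDF m k - b := by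
    rw [binomCDF_sub_binomCDF_succ]; positivity
  have hgap : γ / 2 - b ≤ ε := by
    rw [binomCDF_natCast_add_one] at h₂
    calc γ / 2 - b ≤ ((m + 1).choose (k + 1) : ℝ) / 2 ^ (m + 1) := by linarith
      _ ≤ √(2 / ((m + 1 : ℕ) + 1)) := choose_div_two_pow_le_sqrt _ _
      _ ≤ ε := Real.sqrt_le_sqrt (by gcongr; linarith)
  set q : ℝ := (((m + 1 : ℕ) : ℝ) - k - 1) / (m + 1 : ℕ)
  have hkm : (k : ℝ) ≤ m := by exact_mod_cast Nat.lt_succ_iff.mp hk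
  have hq₀ : 0 ≤ q := div_nonneg (by push_cast; linarith) (by positivity)
  have hq₁ : q ≤ 1 :=
    (div_le_one (by positivity)).2 (by push_cast; linarith [k.cast_nonneg' (α := ℝ)])
  have hqg₀ : 0 ≤ q * (γ / 2 - b) := mul_nonneg hq₀ (by linarith)
  have hqg₁ : q * (γ / 2 - b) ≤ γ / 2 - b := mul_le_of_le_one_left (by linarith) hq₁
  have hdecomp : correctGuessRate γ (m + 1) k - γ / 2
      = (binomCDF m k - b) - (γ / 2 - b) + 2 * (q * (γ / 2 - b)) := by
    simp only [correctGuessRate, Nat.add_sub_cancel, Int.cast_natCast, q, b]; ring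
  rw [hdecomp, abs_le]
  constructor <;> linarith

theorem stmt4_general (γ : ℝ) (hγ0 : 0 < γ)
    (r : ℕ → ℤ)
    (hr1 : ∀ s : ℕ, 2 ≤ s → binomCDF s (r s) ≤ γ / 2)
    (hr2 : ∀ s : ℕ, 2 ≤ s → γ / 2 < binomCDF s (r s + 1)) :
    Tendsto (fun s : ℕ =>
        binomCDF (s - 1) (r s) + ((s : ℝ) - r s - 1) / s * (γ - 2 * binomCDF s (r s)))
      atTop (nhds (γ / 2)) ∧
    Tendsto (fun s : ℕ =>
        (1 / γ) *
          (binomCDF (s - 1) (r s) + ((s : ℝ) - r s - 1) / s * (γ - 2 * binomCDF s (r s))))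
      atTop (nhds (1 / 2)) := by
  have hsmall : ∀ᶠ s : ℕ in atTop, (1 / 2 : ℝ) ^ s < γ / 2 :=
    (tendsto_pow_atTop_nhds_zero_of_lt_one (by norm_num) (by norm_num)).eventually_lt_const
      (half_pos hγ0)
  have hbound :
      ∀ᶠ s : ℕ in atTop, ‖correctGuessRate γ s (r s) - γ / 2‖ ≤ 3 * √(2 / s) := by
    filter_upwards [eventually_ge_atTop 2, hsmall] with s hs hsmall
    obtain ⟨k, hk, hks⟩ := exists_natCast_eq_lt_of_binomCDF_le_lt hsmall (hr1 s hs) (hr2 s hs)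
    rw [Real.norm_eq_abs, hk]
    exact abs_correctGuessRate_sub_le hks (hk ▸ hr1 s hs) (hk ▸ hr2 s hs)
  have hε : Tendsto (fun s : ℕ => 3 * √(2 / (s : ℝ))) atTop (nhds 0) := by
    simpa using ((tendsto_const_div_atTop_nhds_zero_nat 2).sqrt).const_mul 3
  have hlim : Tendsto (fun s => correctGuessRate γ s (r s)) atTop (nhds (γ / 2)) :=
    tendsto_sub_nhds_zero_iff.1 (squeeze_zero_norm' hbound hε)
  refine ⟨hlim, ?_⟩
  rw [show (1 / 2 : ℝ) = 1 / γ * (γ / 2) by field_simp]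
  exact hlim.const_mul _

theorem stmt4 (γ : ℝ) (hγ0 : 0 < γ) (hγ1 : γ < 1)
    (r : ℕ → ℤ) (hr : ∀ s : ℕ, 2 ≤ s → -1 ≤ r s)
    (hr1 : ∀ s : ℕ, 2 ≤ s → binomCDF s (r s) ≤ γ / 2)
    (hr2 : ∀ s : ℕ, 2 ≤ s → γ / 2 < binomCDF s (r s + 1)) :
    Tendsto (fun s : ℕ =>
        binomCDF (s - 1) (r s) + ((s : ℝ) - r s - 1) / s * (γ - 2 * binomCDF s (r s)))
      atTop (nhds (γ / 2)) ∧
    Tendsto (fun s : ℕ =>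
        (1 / γ) *
          (binomCDF (s - 1) (r s) + ((s : ℝ) - r s - 1) / s * (γ - 2 * binomCDF s (r s))))
      atTop (nhds (1 / 2)) :=
  stmt4_general γ hγ0 r hr1 hr2
end

section
/- Let L be a prime with L ≡ 3 (mod 4). Define ā : ZMod L → {0,1} by ā(i) = 1 if i ≠ 0 and i is a quadratic residue modulo L (i.e. i = y² for some y ∈ ZMod L), and ā(i) = 0 otherwise. Then for all distinct i₁, i₂ ∈ ZMod L and all bits b₁, b₂ ∈ {0,1}, the pattern count d_{i₁,i₂}(b₁,b₂) = #{ j ∈ ZMod L : ā(j + i₁) = b₁ and ā(j + i₂) = b₂ } equals (L−3)/4 if (b₁,b₂) = (1,1), and equals (L+1)/4 otherwise. -/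
/-- The Legendre-sequence predicate: `legSeq L i` holds iff `i` is a nonzero quadratic
residue modulo `L`; the binary sequence `ā` takes value `1` exactly where this holds. -/
def legSeq (L : ℕ) (i : ZMod L) : Prop := i ≠ 0 ∧ IsSquare i

/-!
Write the sequence in `±1` form, `ψ = 2ā - 1 = χ - δ₀`, with `χ` the quadratic character.
Then `2·[ā(x) = b] = 1 + (2b - 1) ψ(x)`, so four times the pattern count is
`L + (2b₁ - 1) Σ ψ(x + i₁) + (2b₂ - 1) Σ ψ(x + i₂) + (2b₁ - 1)(2b₂ - 1) Σ ψ(x + i₁) ψ(x + i₂)`.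
Here `Σ ψ = -1`, and the autocorrelation equals `Σ χ(x) χ(x + c) - χ(c) - χ(-c)`, where the
first sum is `-1` by the Jacobi sum `J(χ, χ) = -χ(-1)` and the two corrections cancel because
`χ(-1) = -1` when `L ≡ 3 (mod 4)`.
-/

open Finset

def boolSign (b : Bool) : ℤ := if b then 1 else -1

section QuadraticChar

variable {F : Type*} [Field F] [Fintype F]

theorem ringChar_ne_two_of_card_mod_four_eq_three (hF : Fintype.card F % 4 = 3) :
    ringChar F ≠ 2 := fun h ↦ by
  have := FiniteField.even_card_iff_char_two.mp h
  omega

variable [DecidableEq F]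

theorem quadraticChar_sum_mul_add (hF : ringChar F ≠ 2) {c : F} (hc : c ≠ 0) :
    ∑ x, quadraticChar F x * quadraticChar F (x + c) = -1 := by
  -- `x = -c t` turns the sum into `χ(-1) J(χ, χ) = -χ(-1)²`.
  set χ := quadraticChar F
  have hJ : jacobiSum χ χ = -χ (-1) := by
    simpa only [(quadraticChar_isQuadratic F).inv] using
      jacobiSum_nontrivial_inv (quadraticChar_ne_one hF)
  have hsq : χ (-1) * χ (-1) = 1 := by
    rw [← map_mul, neg_one_mul, neg_neg, map_one]
  calc ∑ x, χ x * χ (x + c) = ∑ t, χ (-c * t) * χ (-c * t + c) :=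
        (Fintype.sum_bijective _ (mulLeft_bijective₀ (-c) (neg_ne_zero.mpr hc)) _ _
          fun _ ↦ rfl).symm
    _ = ∑ t, χ (-1) * (χ t * χ (1 - t)) := by
        refine Fintype.sum_congr _ _ fun t ↦ ?_
        rw [show -c * t + c = c * (1 - t) by ring, show -c * t = -1 * c * t by ring,
          map_mul, map_mul, map_mul]
        have := quadraticChar_sq_one hc
        linear_combination (χ (-1) * χ t * χ (1 - t)) * this
    _ = -1 := by
        rw [← mul_sum, ← jacobiSum, hJ]
        linear_combination -hsq

/-- The Legendre sequence in `±1` form, `2ā - 1`. -/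
def squareSign (x : F) : ℤ := if x ≠ 0 ∧ IsSquare x then 1 else -1

theorem squareSign_eq_quadraticChar_sub (x : F) :
    squareSign x = quadraticChar F x - if x = 0 then 1 else 0 := by
  by_cases hx : x = 0
  · simp [squareSign, hx]
  · by_cases hsq : IsSquare x
    · simp [squareSign, hx, hsq, (quadraticChar_one_iff_isSquare hx).mpr hsq]
    · simp [squareSign, hx, hsq, quadraticChar_neg_one_iff_not_isSquare.mpr hsq]

theorem sum_squareSign_add (hF : ringChar F ≠ 2) (a : F) : ∑ x, squareSign (x + a) = -1 := by
  rw [Fintype.sum_equiv (Equiv.addRight a) (fun x ↦ squareSign (x + a)) squareSign fun _ ↦ rfl]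
  simp [squareSign_eq_quadraticChar_sub, sum_sub_distrib, quadraticChar_sum_zero hF,
    -quadraticChar_apply]

theorem sum_squareSign_mul_add (hF : Fintype.card F % 4 = 3) {c : F} (hc : c ≠ 0) :
    ∑ x, squareSign x * squareSign (x + c) = -1 := by
  have hF2 := ringChar_ne_two_of_card_mod_four_eq_three hF
  have hneg : quadraticChar F (-1) = -1 :=
    quadraticChar_neg_one_iff_not_isSquare.mpr (by simpa [FiniteField.isSquare_neg_one_iff])
  -- `squareSign` differs from `χ` only at `0`, so the corrections are `-χ(c) - χ(-c)`.
  have hodd : quadraticChar F (-c) + quadraticChar F c = 0 := by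
    rw [neg_eq_neg_one_mul, map_mul, hneg]; ring
  simp only [squareSign_eq_quadraticChar_sub, sub_mul, mul_sub, sum_sub_distrib,
    quadraticChar_sum_mul_add hF2 hc, add_eq_zero_iff_eq_neg, mul_ite, ite_mul]
  simp [hc, -quadraticChar_apply]
  linear_combination -hodd

theorem sum_squareSign_add_mul_add (hF : Fintype.card F % 4 = 3) {a b : F} (hab : a ≠ b) :
    ∑ x, squareSign (x + a) * squareSign (x + b) = -1 := by
  rw [Fintype.sum_equiv (Equiv.addRight a) _ (fun y ↦ squareSign y * squareSign (y + (b - a)))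
    fun x ↦ by simp only [Equiv.coe_addRight, add_add_sub_cancel]]
  exact sum_squareSign_mul_add hF (sub_ne_zero.mpr hab.symm)

theorem ite_iff_two_eq_one_add_mul_squareSign (x : F) (b : Bool) :
    (if (x ≠ 0 ∧ IsSquare x ↔ b = true) then (2 : ℤ) else 0) = 1 + boolSign b * squareSign x := by
  unfold squareSign
  cases b <;> by_cases hx : x ≠ 0 ∧ IsSquare x <;> simp [hx, boolSign]

theorem four_mul_card_square_pattern (hF : Fintype.card F % 4 = 3) {i₁ i₂ : F}
    (hne : i₁ ≠ i₂) (b₁ b₂ : Bool) :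
    4 * (Nat.card {x // (x + i₁ ≠ 0 ∧ IsSquare (x + i₁) ↔ b₁ = true) ∧
        (x + i₂ ≠ 0 ∧ IsSquare (x + i₂) ↔ b₂ = true)} : ℤ) =
      Fintype.card F - boolSign b₁ - boolSign b₂ - boolSign b₁ * boolSign b₂ := by
  have hF2 := ringChar_ne_two_of_card_mod_four_eq_three hF
  rw [Nat.card_eq_fintype_card, Fintype.card_subtype, natCast_card_filter, mul_sum]
  calc _ = ∑ x, (1 + boolSign b₁ * squareSign (x + i₁)) *
          (1 + boolSign b₂ * squareSign (x + i₂)) := by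
        refine Fintype.sum_congr _ _ fun x ↦ ?_
        rw [← ite_iff_two_eq_one_add_mul_squareSign,
          ← ite_iff_two_eq_one_add_mul_squareSign]
        split_ifs <;> simp_all
    _ = ∑ x, (1 + boolSign b₁ * squareSign (x + i₁) + boolSign b₂ * squareSign (x + i₂) +
          boolSign b₁ * boolSign b₂ * (squareSign (x + i₁) * squareSign (x + i₂))) :=
        Fintype.sum_congr _ _ fun x ↦ by ring
    _ = Fintype.card F + boolSign b₁ * ∑ x, squareSign (x + i₁) +
          boolSign b₂ * ∑ x, squareSign (x + i₂) +
          boolSign b₁ * boolSign b₂ * ∑ x, squareSign (x + i₁) * squareSign (x + i₂) := by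
        simp only [sum_add_distrib, ← mul_sum, sum_const, card_univ, nsmul_eq_mul, mul_one]
    _ = _ := by
        rw [sum_squareSign_add hF2, sum_squareSign_add hF2, sum_squareSign_add_mul_add hF hne]
        ring

end QuadraticChar

theorem stmt14 (L : ℕ) (hL : Nat.Prime L) (hmod : L % 4 = 3)
    (i₁ i₂ : ZMod L) (hne : i₁ ≠ i₂) (b₁ b₂ : Bool) :
    Nat.card {j : ZMod L //
        (legSeq L (j + i₁) ↔ b₁ = true) ∧ (legSeq L (j + i₂) ↔ b₂ = true)} =
      if b₁ = true ∧ b₂ = true then (L - 3) / 4 else (L + 1) / 4 := by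
  have : Fact L.Prime := ⟨hL⟩
  have key := four_mul_card_square_pattern (by rwa [ZMod.card]) hne b₁ b₂
  rw [ZMod.card] at key
  unfold legSeq
  generalize Nat.card _ = n at key ⊢
  cases b₁ <;> cases b₂ <;> simp [boolSign] at key ⊢ <;> omega
end
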